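/- Let n ≥ 1 be an integer and 0 < a < b < π. Then (1/2π) ∫₀^{2π} cos(n x) · log(1 - cos a cos b - sin a sin b cos x) dx = -(1/n) tan^n(a/2) cot^n(b/2). -/

import Mathlib

/-!
With `r = tan (a/2) cot (b/2) ∈ (0, 1)`, the half-angle formulas give
`1 - cos a cos b - sin a sin b cos x = 2 cos² (a/2) sin² (b/2) (1 - 2 r cos x + r²)`.
Taking real parts in `-log (1 - r e^{ix}) = ∑ r^k e^{ikx} / k` expands
`log (1 - 2 r cos x + r²) = -2 ∑_{k ≥ 1} r^k cos (k x) / k`, an absolutely convergent cosine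
series whose `n`-th coefficient `-2 r^n / n` is extracted by orthogonality; the logarithm of the
constant prefactor is orthogonal to `cos (n x)` for `n ≥ 1`.
-/

open Real intervalIntegral MeasureTheory

theorem integral_cos_int_mul_eq_zero {m : ℤ} (hm : m ≠ 0) :
    ∫ x in (0 : ℝ)..2 * π, cos (m * x) = 0 := by
  rw [integral_comp_mul_left cos (Int.cast_ne_zero.mpr hm), integral_cos, mul_zero, sin_zero,
    show (m : ℝ) * (2 * π) = (2 * m : ℤ) * π by push_cast; ring, sin_int_mul_pi, sub_zero,
    smul_zero]

theorem integral_cos_nat_mul_mul_cos_nat_mul {n : ℕ} (hn : n ≠ 0) (k : ℕ) :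
    ∫ x in (0 : ℝ)..2 * π, cos (n * x) * cos (k * x) = if k = n then π else 0 := by
  have h_prod (x : ℝ) : cos (n * x) * cos (k * x)
      = (cos (((n - k : ℤ) : ℝ) * x) + cos (((n + k : ℤ) : ℝ) * x)) / 2 := by
    push_cast; rw [sub_mul, add_mul, ← two_mul_cos_mul_cos]; ring
  have hcont (m : ℤ) : IntervalIntegrable (fun x => cos (m * x)) volume 0 (2 * π) :=
    (continuous_cos.comp (continuous_const_mul _)).intervalIntegrable _ _
  simp_rw [h_prod]
  rw [intervalIntegral.integral_div, integral_add (hcont _) (hcont _),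
    integral_cos_int_mul_eq_zero (m := n + k) (by omega)]
  split_ifs with hkn
  · simp [hkn]
  · rw [integral_cos_int_mul_eq_zero (by omega)]; simp

-- Over `ℝ`, `Summable c` is absolute summability, which dominates the termwise integration.
theorem integral_cos_mul_of_hasSum_cos {c : ℕ → ℝ} {f : ℝ → ℝ} (hc : Summable c)
    (hf : ∀ x, HasSum (fun k => c k * cos (k * x)) (f x)) {n : ℕ} (hn : n ≠ 0) :
    ∫ x in (0 : ℝ)..2 * π, cos (n * x) * f x = π * c n := by
  have hterm (k : ℕ) : ∫ x in (0 : ℝ)..2 * π, cos (n * x) * (c k * cos (k * x))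
      = if k = n then π * c n else 0 := by
    simp_rw [mul_left_comm _ (c k), intervalIntegral.integral_const_mul,
      integral_cos_nat_mul_mul_cos_nat_mul hn]
    split_ifs with hkn <;> simp [hkn, mul_comm]
  have hsum := hasSum_integral_of_dominated_convergence (μ := volume) (a := 0) (b := 2 * π)
    (F := fun k x => cos (n * x) * (c k * cos (k * x))) (fun k _ => |c k|)
    (fun k => Continuous.aestronglyMeasurable (by fun_prop))
    (fun k => Filter.Eventually.of_forall fun x _ => by
      simpa [abs_mul] using mul_le_mul (abs_cos_le_one _) (mul_le_of_le_one_right (abs_nonneg _)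
        (abs_cos_le_one _)) (by positivity) zero_le_one)
    (Filter.Eventually.of_forall fun _ _ => hc.abs) intervalIntegrable_const
    (Filter.Eventually.of_forall fun x _ => (hf x).mul_left _)
  simp_rw [hterm] at hsum
  exact hsum.unique (hasSum_ite_eq n _)

theorem one_sub_two_mul_mul_cos_add_sq_pos {r : ℝ} (hr : |r| < 1) (x : ℝ) :
    0 < 1 - 2 * r * cos x + r ^ 2 := by
  have : r * cos x ≤ |r| :=
    (le_abs_self _).trans ((abs_mul _ _).trans_le
      (mul_le_of_le_one_right (abs_nonneg r) (abs_cos_le_one x)))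
  nlinarith [sq_abs r, abs_nonneg r]

theorem hasSum_log_one_sub_two_mul_mul_cos_add_sq {r : ℝ} (hr : |r| < 1) (x : ℝ) :
    HasSum (fun k : ℕ => -2 * r ^ k / k * cos (k * x)) (log (1 - 2 * r * cos x + r ^ 2)) := by
  set z : ℂ := r * Complex.exp (x * Complex.I)
  have hz : ‖z‖ < 1 := by simpa [z] using hr
  have hre (k : ℕ) : (z ^ k / k).re = r ^ k / k * cos (k * x) := by
    rw [show z ^ k / k
        = ((r ^ k / k : ℝ) : ℂ) * Complex.exp (((k * x : ℝ) : ℂ) * Complex.I) by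
      simp only [z, mul_pow, ← Complex.exp_nat_mul]; push_cast; ring_nf,
      Complex.re_ofReal_mul, Complex.exp_ofReal_mul_I_re]
  have hnorm : ‖1 - z‖ ^ 2 = 1 - 2 * r * cos x + r ^ 2 := by
    rw [Complex.sq_norm, Complex.normSq_apply]
    simp only [z, Complex.sub_re, Complex.sub_im, Complex.one_re, Complex.one_im,
      Complex.re_ofReal_mul, Complex.im_ofReal_mul, Complex.exp_ofReal_mul_I_re,
      Complex.exp_ofReal_mul_I_im]
    linear_combination r ^ 2 * sin_sq_add_cos_sq x
  have h := (Complex.hasSum_re (Complex.hasSum_taylorSeries_neg_log hz)).mul_left (-2)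
  simp only [hre, Complex.neg_re, Complex.log_re] at h
  rw [show log (1 - 2 * r * cos x + r ^ 2) = -2 * -log ‖1 - z‖ by
    rw [← hnorm, log_pow]; push_cast; ring]
  simpa only [mul_div_assoc, mul_assoc] using h

theorem integral_cos_mul_log_one_sub_two_mul_mul_cos_add_sq {n : ℕ} (hn : n ≠ 0) {r : ℝ}
    (hr : |r| < 1) :
    ∫ x in (0 : ℝ)..2 * π, cos (n * x) * log (1 - 2 * r * cos x + r ^ 2)
      = -2 * π * r ^ n / n := by
  have hc : Summable fun k : ℕ => -2 * r ^ k / k := by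
    refine .of_norm_bounded ((summable_geometric_of_lt_one (abs_nonneg r) hr).mul_left 2)
      fun k => ?_
    rw [norm_div, norm_mul, norm_pow, norm_neg, Real.norm_ofNat, Real.norm_eq_abs,
      RCLike.norm_natCast]
    rcases k.eq_zero_or_pos with rfl | hk
    · simp
    · exact div_le_self (by positivity) (by exact_mod_cast hk)
  rw [integral_cos_mul_of_hasSum_cos hc (hasSum_log_one_sub_two_mul_mul_cos_add_sq hr) hn]
  ring

theorem one_sub_cos_mul_cos_sub_sin_mul_sin_mul_cos {a b : ℝ} (ha : cos (a / 2) ≠ 0)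
    (hb : sin (b / 2) ≠ 0) (x : ℝ) :
    1 - cos a * cos b - sin a * sin b * cos x = 2 * cos (a / 2) ^ 2 * sin (b / 2) ^ 2 *
      (1 - 2 * (tan (a / 2) * cot (b / 2)) * cos x + (tan (a / 2) * cot (b / 2)) ^ 2) := by
  rw [tan_eq_sin_div_cos, cot_eq_cos_div_sin]
  conv_lhs => rw [show a = 2 * (a / 2) by ring, show b = 2 * (b / 2) by ring, cos_two_mul,
    cos_two_mul, sin_two_mul, sin_two_mul]
  field_simp
  linear_combination (-2 * cos (a / 2) ^ 2) * sin_sq_add_cos_sq (b / 2)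
    - 2 * cos (b / 2) ^ 2 * sin_sq_add_cos_sq (a / 2)

theorem abs_tan_half_mul_cot_half_lt_one {a b : ℝ} (ha : 0 < a) (hab : a < b) (hb : b < π) :
    |tan (a / 2) * cot (b / 2)| < 1 := by
  have h_tan_a : 0 < tan (a / 2) := tan_pos_of_pos_of_lt_pi_div_two (by linarith) (by linarith)
  have h_lt : tan (a / 2) < tan (b / 2) :=
    tan_lt_tan_of_nonneg_of_lt_pi_div_two (by linarith) (by linarith) (by linarith)
  have h_tan_b := h_tan_a.trans h_lt
  rw [← tan_inv_eq_cot, ← div_eq_mul_inv, abs_of_pos (div_pos h_tan_a h_tan_b)]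
  exact (div_lt_one h_tan_b).mpr h_lt

theorem stmt_17 (n : ℕ) (hn : 1 ≤ n) (a b : ℝ) (ha : 0 < a) (hab : a < b) (hb : b < π) :
    (1 / (2 * π)) * ∫ x in (0:ℝ)..(2 * π),
        Real.cos (n * x) * Real.log (1 - Real.cos a * Real.cos b
          - Real.sin a * Real.sin b * Real.cos x)
      = -(1 / n) * Real.tan (a / 2) ^ n * Real.cot (b / 2) ^ n := by
  have hn0 : n ≠ 0 := by omega
  set r := tan (a / 2) * cot (b / 2) with hr_def
  have hr : |r| < 1 := abs_tan_half_mul_cot_half_lt_one ha hab hb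
  have hca : cos (a / 2) ≠ 0 := (cos_pos_of_mem_Ioo ⟨by linarith, by linarith⟩).ne'
  have hsb : sin (b / 2) ≠ 0 := (sin_pos_of_pos_of_lt_pi (by linarith) (by linarith)).ne'
  set C := 2 * cos (a / 2) ^ 2 * sin (b / 2) ^ 2
  have hC : C ≠ 0 := by simp [C, hca, hsb]
  have h_split (x : ℝ) : cos (n * x) * log (1 - cos a * cos b - sin a * sin b * cos x)
      = cos (n * x) * log C + cos (n * x) * log (1 - 2 * r * cos x + r ^ 2) := by
    rw [one_sub_cos_mul_cos_sub_sin_mul_sin_mul_cos hca hsb,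
      log_mul hC (one_sub_two_mul_mul_cos_add_sq_pos hr x).ne', mul_add]
  have h_cos_int : ∫ x in (0 : ℝ)..2 * π, cos (n * x) = 0 := by
    simpa [hn0.symm] using integral_cos_nat_mul_mul_cos_nat_mul hn0 0
  have h_int_const : IntervalIntegrable (fun x => cos (n * x) * log C) volume 0 (2 * π) :=
    (Continuous.mul (by fun_prop) continuous_const).intervalIntegrable _ _
  have h_int : IntervalIntegrable (fun x => cos (n * x) * log (1 - 2 * r * cos x + r ^ 2))
      volume 0 (2 * π) :=
    (Continuous.mul (by fun_prop) (.log (by fun_prop)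
      fun x => (one_sub_two_mul_mul_cos_add_sq_pos hr x).ne')).intervalIntegrable _ _
  simp_rw [h_split]
  rw [integral_add h_int_const h_int,
    intervalIntegral.integral_mul_const, h_cos_int, zero_mul, zero_add,
    integral_cos_mul_log_one_sub_two_mul_mul_cos_add_sq hn0 hr, hr_def, mul_pow]
  field_simp
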